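/- arXiv:1503.08270 — 3 statements merged into one kernel-verified Lean document; each statement's English description precedes it below -/
import Mathlib

section
/- Let B = (X, Y; E) be a d-regular bipartite graph with |X| = |Y| = n where d divides n. Then the number of proper decompositions of the part Y is at most d!^{n/d}. -/
open Finset

open scoped Classical

noncomputable section Aux4

private lemma fact_pow_le_aux (b c : ℕ) (h : b ≤ c) :
    b.factorial ^ c ≤ c.factorial ^ b := by
  induction c, h using Nat.le_induction with
  | base => exact le_rfl
  | succ c hbc ih =>
    calc b.factorial ^ (c + 1) = b.factorial ^ c * b.factorial := pow_succ _ _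
      _ ≤ c.factorial ^ b * (c + 1) ^ b :=
          Nat.mul_le_mul ih ((Nat.factorial_le_pow b).trans (Nat.pow_le_pow_left (by omega) b))
      _ = (c + 1).factorial ^ b := by
          rw [Nat.factorial_succ, mul_pow, mul_comm]

variable {n d : ℕ}

/-- Vertices of `Y` seen by `x`'s with index `< k`. -/
def U4 (E : Fin n → Fin n → Prop) (k : ℕ) : Finset (Fin n) :=
  univ.filter fun y => ∃ x : Fin n, x.1 < k ∧ E x y

/-- Neighborhood of the vertex of index `k`. -/
def N4 (E : Fin n → Fin n → Prop) (k : ℕ) : Finset (Fin n) :=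
  univ.filter fun y => ∃ x : Fin n, x.1 = k ∧ E x y

/-- Restriction of a coloring to `U4 E k`, with default value elsewhere. -/
def P4 (hd : 0 < d) (E : Fin n → Fin n → Prop) (k : ℕ) (c : Fin n → Fin d) :
    Fin n → Fin d := fun y => if y ∈ U4 E k then c y else ⟨0, hd⟩

end Aux4

/-- For a `d`-regular bipartite graph `B = (X, Y; E)` with `|X| = |Y| = n` and `d ∣ n`,
the number of proper decompositions of the part `Y` (partitions of `Y` into `d` classes
such that every `x ∈ X` is adjacent to exactly one vertex of each class) is at most
`d!^(n/d)`. -/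
theorem stmt4 (n d : ℕ) (hd : 0 < d) (hdn : d ∣ n) (E : Fin n → Fin n → Prop)
    (hregX : ∀ x : Fin n, {y : Fin n | E x y}.ncard = d)
    (hregY : ∀ y : Fin n, {x : Fin n | E x y}.ncard = d) :
    {c : Fin n → Fin d | ∀ x : Fin n, ∀ i : Fin d, ∃! y : Fin n, E x y ∧ c y = i}.ncard ≤
      d.factorial ^ (n / d) := by
  classical
  set S : Finset (Fin n → Fin d) :=
    univ.filter (fun c => ∀ x : Fin n, ∀ i : Fin d, ∃! y : Fin n, E x y ∧ c y = i) with hS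
  have hset : {c : Fin n → Fin d | ∀ x : Fin n, ∀ i : Fin d,
      ∃! y : Fin n, E x y ∧ c y = i}.ncard = S.card := by
    rw [← Set.ncard_coe_finset]
    congr 1
    ext c
    simp [hS]
  rw [hset]; clear hset
  -- basic facts
  have hN4mem : ∀ k (hk : k < n) (y : Fin n), y ∈ N4 E k ↔ E ⟨k, hk⟩ y := by
    intro k hk y
    simp only [N4, mem_filter, mem_univ, true_and]
    constructor
    · rintro ⟨x, hx, hE⟩
      have : x = ⟨k, hk⟩ := Fin.ext hx
      rwa [this] at hE
    · intro hE
      exact ⟨⟨k, hk⟩, rfl, hE⟩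
  have hNcard : ∀ k, k < n → (N4 E k).card = d := by
    intro k hk
    have h1 : (↑(N4 E k) : Set (Fin n)) = {y | E ⟨k, hk⟩ y} := by
      ext y; simpa using hN4mem k hk y
    have := hregX ⟨k, hk⟩
    rw [← h1, Set.ncard_coe_finset] at this
    exact this
  have hUn : U4 E n = (univ : Finset (Fin n)) := by
    ext y
    simp only [U4, mem_filter, mem_univ, true_and, iff_true]
    have hne : {x : Fin n | E x y}.Nonempty := by
      apply Set.nonempty_of_ncard_ne_zero
      rw [hregY y]; omega
    obtain ⟨x, hx⟩ := hne
    exact ⟨x, x.isLt, hx⟩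
  have hstep : ∀ k, U4 E (k + 1) = U4 E k ∪ N4 E k := by
    intro k
    ext y
    simp only [U4, N4, mem_union, mem_filter, mem_univ, true_and]
    constructor
    · rintro ⟨x, hx, hE⟩
      rcases Nat.lt_succ_iff_lt_or_eq.1 hx with h | h
      · exact Or.inl ⟨x, h, hE⟩
      · exact Or.inr ⟨x, h, hE⟩
    · rintro (⟨x, hx, hE⟩ | ⟨x, hx, hE⟩)
      · exact ⟨x, by omega, hE⟩
      · exact ⟨x, by omega, hE⟩
  set b : ℕ → ℕ := fun k => (N4 E k \ U4 E k).card with hb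
  have hUcard : ∀ k, (U4 E (k + 1)).card = (U4 E k).card + b k := by
    intro k
    rw [hstep k, ← Finset.union_sdiff_self_eq_union,
      Finset.card_union_of_disjoint disjoint_sdiff]
  have hsum : ∑ k ∈ range n, b k = n := by
    have h1 : ∀ m, (U4 E m).card = ∑ k ∈ range m, b k := by
      intro m
      induction m with
      | zero =>
        simp only [range_zero, sum_empty]
        have : U4 E 0 = ∅ := by
          ext y; simp [U4]
        rw [this, card_empty]
      | succ m ih =>
        rw [hUcard m, ih, sum_range_succ]
    have h2 := h1 n
    rw [hUn, card_univ, Fintype.card_fin] at h2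
    omega
  have hble : ∀ k, k < n → b k ≤ d := by
    intro k hk
    calc b k ≤ (N4 E k).card := card_le_card sdiff_subset
      _ = d := hNcard k hk
  -- injectivity of valid colorings on neighborhoods
  have hmemS : ∀ c ∈ S, ∀ x : Fin n, ∀ y₁ y₂ : Fin n, E x y₁ → E x y₂ → c y₁ = c y₂ →
      y₁ = y₂ := by
    intro c hc x y₁ y₂ hy₁ hy₂ hcy
    have hv := (mem_filter.1 hc).2 x (c y₁)
    exact hv.unique ⟨hy₁, rfl⟩ ⟨hy₂, hcy.symm⟩
  -- the composition identity
  have hcomp : ∀ m (c : Fin n → Fin d), P4 hd E m (P4 hd E (m + 1) c) = P4 hd E m c := by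
    intro m c
    funext y
    by_cases hy : y ∈ U4 E m
    · have hy' : y ∈ U4 E (m + 1) := by
        rw [hstep m]; exact mem_union_left _ hy
      simp [P4, hy, hy']
    · simp [P4, hy]
  -- main induction
  have hmain : ∀ m, m ≤ n →
      (S.image (P4 hd E m)).card ≤ ∏ k ∈ range m, (b k).factorial := by
    intro m
    induction m with
    | zero =>
      intro _
      have hsub : S.image (P4 hd E 0) ⊆ {fun _ => (⟨0, hd⟩ : Fin d)} := by
        intro c' hc'
        obtain ⟨c, _, hcc'⟩ := mem_image.1 hc'
        have hU0 : U4 E 0 = ∅ := by ext y; simp [U4]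
        have : c' = fun _ => (⟨0, hd⟩ : Fin d) := by
          rw [← hcc']; funext y; simp [P4, hU0]
        simp [this]
      simpa using card_le_card hsub
    | succ m ih =>
      intro hm1
      have hm : m < n := hm1
      have ihm := ih (le_of_lt hm)
      set xm : Fin n := ⟨m, hm⟩ with hxm
      -- fiber bound
      have hfiber : ∀ r ∈ (S.image (P4 hd E (m + 1))).image (P4 hd E m),
          ((S.image (P4 hd E (m + 1))).filter fun c' => P4 hd E m c' = r).card ≤
            (b m).factorial := by
        intro r hr
        set F := (S.image (P4 hd E (m + 1))).filter fun c' => P4 hd E m c' = r with hF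
        rcases F.eq_empty_or_nonempty with h0 | ⟨c₀', hc₀'⟩
        · simp [← hF, h0]
        -- witness extraction
        have hwit : ∀ c' ∈ F, ∃ c ∈ S, P4 hd E (m + 1) c = c' ∧ P4 hd E m c = r := by
          intro c' hc'
          obtain ⟨hc'1, hc'2⟩ := mem_filter.1 hc'
          obtain ⟨c, hcS, hcc'⟩ := mem_image.1 hc'1
          refine ⟨c, hcS, hcc', ?_⟩
          rw [← hc'2, ← hcc', hcomp]
        obtain ⟨c₀, hc₀S, hc₀eq, hc₀r⟩ := hwit c₀' hc₀'
        set T : Finset (Fin d) := (N4 E m ∩ U4 E m).image r with hT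
        have hragree : ∀ c, P4 hd E m c = r → ∀ y ∈ U4 E m, c y = r y := by
          intro c hpr y hy
          rw [← hpr]; simp [P4, hy]
        have hTcard : T.card = (N4 E m ∩ U4 E m).card := by
          apply Finset.card_image_of_injOn
          intro y₁ hy₁ y₂ hy₂ hrr
          have e₁ : r y₁ = c₀ y₁ := (hragree c₀ hc₀r y₁ (mem_inter.1 hy₁).2).symm
          have e₂ : r y₂ = c₀ y₂ := (hragree c₀ hc₀r y₂ (mem_inter.1 hy₂).2).symm
          rw [e₁, e₂] at hrr
          exact hmemS c₀ hc₀S xm y₁ y₂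
            ((hN4mem m hm y₁).1 (mem_inter.1 hy₁).1)
            ((hN4mem m hm y₂).1 (mem_inter.1 hy₂).1) hrr
        have hcardsplit : (N4 E m ∩ U4 E m).card + b m = d := by
          rw [hb]
          rw [Finset.card_inter_add_card_sdiff]
          exact hNcard m hm
        -- properties of fiber elements on the new block
        have hprop : ∀ c' ∈ F, (∀ y ∈ N4 E m \ U4 E m, c' y ∉ T) ∧
            (∀ y₁ ∈ N4 E m \ U4 E m, ∀ y₂ ∈ N4 E m \ U4 E m, c' y₁ = c' y₂ → y₁ = y₂) := by
          intro c' hc'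
          obtain ⟨c, hcS, hc1, hc2⟩ := hwit c' hc'
          have hval : ∀ y ∈ N4 E m \ U4 E m, c' y = c y := by
            intro y hy
            have hyU : y ∈ U4 E (m + 1) := by
              rw [hstep m]; exact mem_union_right _ (mem_sdiff.1 hy).1
            rw [← hc1]; simp [P4, hyU]
          constructor
          · intro y hy hmemT
            obtain ⟨z, hz, hzy⟩ := mem_image.1 hmemT
            have hrz : r z = c z := (hragree c hc2 z (mem_inter.1 hz).2).symm
            have hcc : c z = c y := by
              rw [← hrz, hzy, hval y hy]
            have hzyeq : z = y := hmemS c hcS xm z y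
              ((hN4mem m hm z).1 (mem_inter.1 hz).1)
              ((hN4mem m hm y).1 (mem_sdiff.1 hy).1) hcc
            exact (mem_sdiff.1 hy).2 (hzyeq ▸ (mem_inter.1 hz).2)
          · intro y₁ h₁ y₂ h₂ he
            rw [hval y₁ h₁, hval y₂ h₂] at he
            exact hmemS c hcS xm y₁ y₂
              ((hN4mem m hm y₁).1 (mem_sdiff.1 h₁).1)
              ((hN4mem m hm y₂).1 (mem_sdiff.1 h₂).1) he
        -- fiber elements agreeing on the new block are equal
        have hinj2 : ∀ c₁' ∈ F, ∀ c₂' ∈ F,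
            (∀ y ∈ N4 E m \ U4 E m, c₁' y = c₂' y) → c₁' = c₂' := by
          intro c₁' h₁ c₂' h₂ hag
          obtain ⟨c₁, hc₁S, e₁, r₁⟩ := hwit c₁' h₁
          obtain ⟨c₂, hc₂S, e₂, r₂⟩ := hwit c₂' h₂
          funext y
          by_cases hyU : y ∈ U4 E m
          · have t₁ := congrFun (mem_filter.1 h₁).2 y
            have t₂ := congrFun (mem_filter.1 h₂).2 y
            simp only [P4, if_pos hyU] at t₁ t₂
            rw [t₁, t₂]
          · by_cases hyN : y ∈ N4 E m
            · exact hag y (mem_sdiff.2 ⟨hyN, hyU⟩)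
            · have hyU1 : y ∉ U4 E (m + 1) := by
                rw [hstep m]
                simp [hyU, hyN]
              rw [← e₁, ← e₂]
              simp [P4, hyU1]
        -- inject the fiber into embeddings
        have hcardle : F.card ≤ Fintype.card (↥(N4 E m \ U4 E m) ↪ ↥(Tᶜ)) := by
          have hmap : ∀ c' : ↥F, ∀ y : ↥(N4 E m \ U4 E m), (c'.1 y.1) ∈ Tᶜ := by
            intro c' y
            rw [Finset.mem_compl]
            exact (hprop c'.1 c'.2).1 y.1 y.2
          let φ : ↥F → (↥(N4 E m \ U4 E m) ↪ ↥(Tᶜ)) := fun c' =>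
            ⟨fun y => ⟨c'.1 y.1, hmap c' y⟩, by
              intro y₁ y₂ hy
              apply Subtype.ext
              exact (hprop c'.1 c'.2).2 y₁.1 y₁.2 y₂.1 y₂.2
                (congrArg Subtype.val hy)⟩
          have hφinj : Function.Injective φ := by
            intro c₁' c₂' hφ
            apply Subtype.ext
            apply hinj2 c₁'.1 c₁'.2 c₂'.1 c₂'.2
            intro y hy
            have := congrFun (congrArg (fun e => e.toFun) hφ) ⟨y, hy⟩
            exact congrArg Subtype.val this
          have := Fintype.card_le_of_injective φ hφinj
          rwa [Fintype.card_coe] at this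
        have hemb : Fintype.card (↥(N4 E m \ U4 E m) ↪ ↥(Tᶜ)) = (b m).factorial := by
          rw [Fintype.card_embedding_eq, Fintype.card_coe, Fintype.card_coe,
            Finset.card_compl, Fintype.card_fin, hTcard]
          have h3 : d - (N4 E m ∩ U4 E m).card = b m := by omega
          rw [h3]
          exact Nat.descFactorial_self (b m)
        calc F.card ≤ Fintype.card (↥(N4 E m \ U4 E m) ↪ ↥(Tᶜ)) := hcardle
          _ = (b m).factorial := hemb
      -- apply the fiber counting lemma
      have hkey := Finset.card_le_mul_card_image (s := S.image (P4 hd E (m + 1)))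
        (f := P4 hd E m) ((b m).factorial) hfiber
      have himg : (S.image (P4 hd E (m + 1))).image (P4 hd E m) = S.image (P4 hd E m) := by
        rw [Finset.image_image]
        apply Finset.image_congr
        intro c _
        exact hcomp m c
      rw [himg] at hkey
      calc (S.image (P4 hd E (m + 1))).card
          ≤ (b m).factorial * (S.image (P4 hd E m)).card := hkey
        _ ≤ (b m).factorial * ∏ k ∈ range m, (b k).factorial :=
            Nat.mul_le_mul_left _ ihm
        _ = ∏ k ∈ range (m + 1), (b k).factorial := by
            rw [prod_range_succ, mul_comm]
  -- S.card equals the card of the full restriction image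
  have hid : ∀ c : Fin n → Fin d, P4 hd E n c = c := by
    intro c
    funext y
    have : y ∈ U4 E n := by rw [hUn]; exact mem_univ y
    simp [P4, this]
  have hScard : S.card = (S.image (P4 hd E n)).card := by
    have : S.image (P4 hd E n) = S := by
      have h1 : S.image (P4 hd E n) = S.image id := Finset.image_congr fun c _ => hid c
      rw [h1, Finset.image_id]
    rw [this]
  -- numeric conclusion
  have hnum : ∏ k ∈ range n, (b k).factorial ≤ d.factorial ^ (n / d) := by
    have hd0 : d ≠ 0 := by omega
    have hpow : (∏ k ∈ range n, (b k).factorial) ^ d ≤ (d.factorial ^ (n / d)) ^ d := by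
      calc (∏ k ∈ range n, (b k).factorial) ^ d
          = ∏ k ∈ range n, (b k).factorial ^ d := by rw [← Finset.prod_pow]
        _ ≤ ∏ k ∈ range n, d.factorial ^ b k :=
            Finset.prod_le_prod' fun k hk => fact_pow_le_aux _ _ (hble k (mem_range.1 hk))
        _ = d.factorial ^ (∑ k ∈ range n, b k) := by rw [← Finset.prod_pow_eq_pow_sum]
        _ = d.factorial ^ n := by rw [hsum]
        _ = (d.factorial ^ (n / d)) ^ d := by rw [← pow_mul, Nat.div_mul_cancel hdn]
    exact (Nat.pow_le_pow_iff_left hd0).1 hpow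
  calc S.card = (S.image (P4 hd E n)).card := hScard
    _ ≤ ∏ k ∈ range n, (b k).factorial := hmain n le_rfl
    _ ≤ d.factorial ^ (n / d) := hnum
end

section
/- Let A be an n×n matrix with nonnegative integer entries such that each row sum and each column sum equals 3, and suppose A is the biadjacency matrix of a connected bipartite graph. Then per A ≥ 2 · (4/3)^n. -/
/-- The permanent of an `n × n` matrix with natural-number entries. -/
def matPermanent {n : ℕ} (A : Matrix (Fin n) (Fin n) ℕ) : ℕ :=
  ∑ σ : Equiv.Perm (Fin n), ∏ i : Fin n, A i (σ i)

/-- The bipartite graph on `Fin n ⊕ Fin n` determined by the biadjacency relation `E`. -/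
def bipGraph {n : ℕ} (E : Fin n → Fin n → Prop) : SimpleGraph (Fin n ⊕ Fin n) where
  Adj a b := (∃ x y, a = Sum.inl x ∧ b = Sum.inr y ∧ E x y) ∨
    (∃ x y, a = Sum.inr y ∧ b = Sum.inl x ∧ E x y)
  symm := by
    constructor
    rintro a b (⟨x, y, rfl, rfl, h⟩ | ⟨x, y, rfl, rfl, h⟩)
    · exact Or.inr ⟨x, y, rfl, rfl, h⟩
    · exact Or.inl ⟨x, y, rfl, rfl, h⟩
  loopless := by
    constructor
    rintro a (⟨x, y, h1, h2, _⟩ | ⟨x, y, h1, h2, _⟩) <;> simp_all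

/-!
Call a nonnegative integer matrix *deficient* if all its line sums are 3 except that one row and
one column sum to 2, and *row-shifted* if its column sums are 3 and its row sums are 3 except
that one row sums to 2 and another to 4 (or all row sums are 3). By simultaneous induction on the
size `m`, a deficient matrix has permanent at least `(3/2) (4/3)^m` and a row-shifted one at least
`2 (4/3)^m`; a 3-regular matrix is row-shifted.

For a row-shifted `A`, take a row of sum `s ∈ {3, 4}` and in it the positive entry whose minor
has the largest permanent. Then `per A ≤ s · per(minor)`, while lowering that entry by one gives a
deficient `A'` with `per A = per A' + per(minor)`; hence `per A ≥ s/(s-1) · per A' ≥ 4/3 · per A'`.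
For a deficient `B`, expand along its column of sum 2. If that column is `2 e_p`, then
`per B = 2 per(minor)` and the minor is 3-regular or deficient. If it is `e_p + e_q` with `p ≠ q`,
then `per B` is the permanent of the matrix obtained by adding row `q` to row `p` and deleting
row `q` and that column, and this matrix is row-shifted.
-/

open Finset Matrix

theorem matPermanent_eq_permanent {n : ℕ} (A : Matrix (Fin n) (Fin n) ℕ) :
    matPermanent A = A.permanent :=
  permanent_transpose A

namespace Matrix

section Permanent

variable {R ι : Type*} [CommSemiring R] {n : ℕ}

theorem permanent_succ_column_zero (A : Matrix (Fin (n + 1)) (Fin (n + 1)) R) :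
    A.permanent = ∑ i, A i 0 * (A.submatrix i.succAbove Fin.succ).permanent := by
  rw [permanent, ← Equiv.sum_comp Equiv.Perm.decomposeFin.symm, ← univ_product_univ,
    sum_product]
  refine sum_congr rfl fun i _ => ?_
  simp only [Fin.prod_univ_succ, Equiv.Perm.decomposeFin_symm_apply_zero,
    Equiv.Perm.decomposeFin_symm_apply_succ, permanent, mul_sum, submatrix_apply]
  induction i using Fin.cases with
  | zero => simp
  | succ i =>
    simp only [← Fin.succAbove_cycleRange]
    exact Fintype.sum_equiv (Equiv.mulLeft i.cycleRange) _ _ fun σ => rfl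

theorem permanent_succ_column (A : Matrix (Fin (n + 1)) (Fin (n + 1)) R) (j : Fin (n + 1)) :
    A.permanent = ∑ i, A i j * (A.submatrix i.succAbove j.succAbove).permanent := by
  rw [← permanent_permute_rows j.cycleRange.symm, permanent_succ_column_zero]
  simp [submatrix_submatrix, Function.comp_def]

theorem permanent_succ_row (A : Matrix (Fin (n + 1)) (Fin (n + 1)) R) (i : Fin (n + 1)) :
    A.permanent = ∑ j, A i j * (A.submatrix i.succAbove j.succAbove).permanent := by
  rw [← permanent_transpose, permanent_succ_column _ i]
  simp [← transpose_submatrix, permanent_transpose]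

theorem permanent_updateCol_add [DecidableEq ι] [Fintype ι] (A : Matrix ι ι R) (j : ι)
    (u v : ι → R) :
    (A.updateCol j (u + v)).permanent =
      (A.updateCol j u).permanent + (A.updateCol j v).permanent := by
  simp only [permanent, ← sum_add_distrib, ← mul_prod_erase _ _ (mem_univ j), updateCol_self,
    Pi.add_apply, add_mul]
  refine sum_congr rfl fun σ _ => ?_
  congr 2 <;> exact prod_congr rfl fun k hk => by simp [ne_of_mem_erase hk]

theorem permanent_updateRow_add [DecidableEq ι] [Fintype ι] (A : Matrix ι ι R) (i : ι)
    (u v : ι → R) :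
    (A.updateRow i (u + v)).permanent =
      (A.updateRow i u).permanent + (A.updateRow i v).permanent := by
  simp only [← permanent_transpose (updateRow _ _ _), ← updateCol_transpose,
    permanent_updateCol_add]

theorem permanent_updateRow_single (A : Matrix (Fin (n + 1)) (Fin (n + 1)) R)
    (i j : Fin (n + 1)) :
    (A.updateRow i (Pi.single j 1)).permanent =
      (A.submatrix i.succAbove j.succAbove).permanent := by
  rw [permanent_succ_row _ i]
  simp [Pi.single_apply]

theorem permanent_add_single (A : Matrix (Fin (n + 1)) (Fin (n + 1)) R) (i j : Fin (n + 1)) :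
    (A + single i j 1).permanent =
      A.permanent + (A.submatrix i.succAbove j.succAbove).permanent := by
  have hrow : A + single i j 1 = A.updateRow i (A i + Pi.single j 1) := by
    ext k l
    by_cases hk : k = i
    · simp [hk, single_apply, Pi.single_apply, eq_comm]
    · simp [hk, Ne.symm hk]
  rw [hrow, permanent_updateRow_add, updateRow_eq_self, permanent_updateRow_single]

theorem permanent_eq_add_of_col_eq_single_add_single (B : Matrix (Fin (n + 1)) (Fin (n + 1)) R)
    {w p q : Fin (n + 1)} (hw : Bᵀ w = Pi.single p 1 + Pi.single q 1) :
    B.permanent = (B.submatrix p.succAbove w.succAbove).permanent +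
      (B.submatrix q.succAbove w.succAbove).permanent := by
  rw [permanent_succ_column B w]
  simp only [← transpose_apply B, hw]
  simp [add_mul, sum_add_distrib, Pi.single_apply]

/-- Replacing row `q` by `e_w` does not change the right-hand side; splitting the new row `p`
then gives the two minors along column `w`, one of them after swapping rows `p` and `q`. -/
theorem permanent_eq_merge_rows_of_col_eq_single_add_single
    (B : Matrix (Fin (n + 1)) (Fin (n + 1)) R) {w p q : Fin (n + 1)} (hpq : p ≠ q)
    (hw : Bᵀ w = Pi.single p 1 + Pi.single q 1) :
    B.permanent = ((B.updateRow p (B p + B q)).submatrix q.succAbove w.succAbove).permanent := by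
  have hswap : ((B.updateRow q (Pi.single w 1)).updateRow p (B q)).permanent =
      (B.updateRow p (Pi.single w 1)).permanent := by
    rw [← permanent_permute_cols (Equiv.swap p q)]
    congr 1
    ext k l
    rcases eq_or_ne k p with rfl | hkp
    · simp [hpq.symm]
    rcases eq_or_ne k q with rfl | hkq
    · simp [hkp]
    · simp [hkp, hkq, Equiv.swap_apply_of_ne_of_ne]
  have hkeep : ((B.updateRow q (Pi.single w 1)).updateRow p (B p)).permanent =
      (B.submatrix q.succAbove w.succAbove).permanent := by
    rw [← permanent_updateRow_single, ← updateRow_ne (M := B) (b := Pi.single w 1) hpq,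
      updateRow_eq_self]
  rw [← permanent_updateRow_single, updateRow_comm _ hpq, permanent_updateRow_add, hswap, hkeep,
    permanent_updateRow_single, permanent_eq_add_of_col_eq_single_add_single B hw, add_comm]

end Permanent

section LineSums

variable {R ι κ : Type*} [NonAssocSemiring R] {n : ℕ}

theorem mulVec_one_apply [Fintype κ] (A : Matrix ι κ R) (i : ι) :
    (A *ᵥ 1) i = ∑ j, A i j := by
  simp [mulVec, dotProduct]

theorem one_vecMul_apply [Fintype ι] (A : Matrix ι κ R) (j : κ) :
    (1 ᵥ* A) j = ∑ i, A i j := by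
  simp [vecMul, dotProduct]

theorem updateRow_add_mulVec_one [DecidableEq ι] [Fintype κ] (A : Matrix ι κ R) (i : ι)
    (v : κ → R) : A.updateRow i (A i + v) *ᵥ 1 = A *ᵥ 1 + Pi.single i (∑ j, v j) := by
  ext k
  by_cases hk : k = i
  · simp [hk, mulVec_one_apply, sum_add_distrib]
  · simp [hk, mulVec_one_apply]

theorem one_vecMul_updateRow_add [DecidableEq ι] [Fintype ι] (A : Matrix ι κ R) (i : ι)
    (v : κ → R) : 1 ᵥ* A.updateRow i (A i + v) = 1 ᵥ* A + v := by
  ext l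
  have h (k : ι) : A.updateRow i (A i + v) k l = A k l + if k = i then v l else 0 := by
    by_cases hk : k = i <;> simp [hk]
  simp [one_vecMul_apply, h, sum_add_distrib]

theorem add_single_mulVec_one (A : Matrix (Fin n) (Fin n) R) (i j : Fin n) :
    (A + single i j 1) *ᵥ 1 = A *ᵥ 1 + Pi.single i 1 := by
  rw [add_mulVec, single_mulVec]
  simp [Pi.single]

theorem one_vecMul_add_single (A : Matrix (Fin n) (Fin n) R) (i j : Fin n) :
    1 ᵥ* (A + single i j 1) = 1 ᵥ* A + Pi.single j 1 := by
  rw [vecMul_add]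
  ext l
  simp [one_vecMul_apply, single_apply, Pi.single_apply, ite_and, eq_comm]

theorem submatrix_succAbove_mulVec_one_apply (A : Matrix (Fin (n + 1)) (Fin (n + 1)) R)
    (i j : Fin (n + 1)) (k : Fin n) :
    (A.submatrix i.succAbove j.succAbove *ᵥ 1) k + A (i.succAbove k) j =
      (A *ᵥ 1) (i.succAbove k) := by
  simp [mulVec_one_apply, Fin.sum_univ_succAbove _ j, add_comm]

theorem one_vecMul_submatrix_succAbove_apply (A : Matrix (Fin (n + 1)) (Fin (n + 1)) R)
    (i j : Fin (n + 1)) (l : Fin n) :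
    (1 ᵥ* A.submatrix i.succAbove j.succAbove) l + A i (j.succAbove l) =
      (1 ᵥ* A) (j.succAbove l) := by
  simp [one_vecMul_apply, Fin.sum_univ_succAbove _ i, add_comm]

end LineSums

end Matrix

section SumEq

variable {ι : Type*} [Fintype ι] [DecidableEq ι]

theorem exists_eq_add_single_of_sum_eq_succ {f : ι → ℕ} {k : ℕ} (h : ∑ i, f i = k + 1) :
    ∃ p, ∃ g : ι → ℕ, f = g + Pi.single p 1 ∧ ∑ i, g i = k := by
  obtain ⟨p, -, hp⟩ := exists_ne_zero_of_sum_ne_zero (by rw [h]; omega : ∑ i, f i ≠ 0)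
  have hf : f = (f - Pi.single p 1) + Pi.single p 1 := by
    ext i
    by_cases hi : i = p
    · subst hi; simp; omega
    · simp [hi]
  refine ⟨p, _, hf, ?_⟩
  rw [hf] at h
  simpa [sum_add_distrib] using h

theorem exists_eq_single_of_sum_eq_one {f : ι → ℕ} (h : ∑ i, f i = 1) :
    ∃ p, f = Pi.single p 1 := by
  obtain ⟨p, g, rfl, hg⟩ := exists_eq_add_single_of_sum_eq_succ h
  obtain rfl : g = 0 := funext fun i => sum_eq_zero_iff.mp hg i (mem_univ i)
  exact ⟨p, zero_add _⟩

theorem exists_eq_single_add_single_of_sum_eq_two {f : ι → ℕ} (h : ∑ i, f i = 2) :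
    ∃ p q, f = Pi.single p 1 + Pi.single q 1 := by
  obtain ⟨q, g, rfl, hg⟩ := exists_eq_add_single_of_sum_eq_succ h
  obtain ⟨p, rfl⟩ := exists_eq_single_of_sum_eq_one hg
  exact ⟨p, q, rfl⟩

end SumEq

theorem exists_eq_add_single_and_permanent_le {n : ℕ} (A : Matrix (Fin (n + 1)) (Fin (n + 1)) ℕ)
    (i : Fin (n + 1)) (hi : (A *ᵥ 1) i ≠ 0) :
    ∃ j A', A = A' + single i j 1 ∧
      (A *ᵥ 1) i * A'.permanent + A.permanent ≤ (A *ᵥ 1) i * A.permanent := by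
  set s := (A *ᵥ 1) i with hs
  let minorPer (j : Fin (n + 1)) := (A.submatrix i.succAbove j.succAbove).permanent
  have hsupp : (univ.filter fun j => A i j ≠ 0).Nonempty := by
    rw [hs, mulVec_one_apply] at hi
    obtain ⟨j, -, hj⟩ := exists_ne_zero_of_sum_ne_zero hi
    exact ⟨j, by simpa using hj⟩
  obtain ⟨j, hj, hmax⟩ := exists_max_image _ minorPer hsupp
  have hA : A = (A - single i j 1) + single i j 1 := by
    ext k l
    have : A i j ≠ 0 := (mem_filter.mp hj).2
    by_cases hkl : i = k ∧ j = l
    · obtain ⟨rfl, rfl⟩ := hkl; simp; omega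
    · simp [hkl]
  have hper : A.permanent ≤ s * minorPer j := by
    rw [permanent_succ_row A i, hs, mulVec_one_apply, sum_mul]
    refine sum_le_sum fun k _ => ?_
    by_cases hk : A i k = 0
    · simp [hk]
    · exact Nat.mul_le_mul_left _ (hmax k (by simpa using hk))
  have hsplit : A.permanent = (A - single i j 1).permanent + minorPer j := by
    conv_lhs => rw [hA, permanent_add_single]
    congr 2
    ext k l
    simp
  refine ⟨j, _, hA, ?_⟩
  calc s * (A - single i j 1).permanent + A.permanent
      ≤ s * (A - single i j 1).permanent + s * minorPer j := by gcongr
    _ = s * A.permanent := by rw [hsplit, mul_add]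

def HasDeficiency {m : ℕ} (A : Matrix (Fin m) (Fin m) ℕ) (u w : Fin m) : Prop :=
  A *ᵥ 1 + Pi.single u 1 = 3 ∧ 1 ᵥ* A + Pi.single w 1 = 3

def HasRowShift {m : ℕ} (A : Matrix (Fin m) (Fin m) ℕ) (u v : Fin m) : Prop :=
  A *ᵥ 1 + Pi.single u 1 = 3 + Pi.single v 1 ∧ 1 ᵥ* A = 3

namespace HasDeficiency

variable {n : ℕ} {B : Matrix (Fin (n + 2)) (Fin (n + 2)) ℕ} {u w : Fin (n + 2)}

theorem regular_submatrix (hB : HasDeficiency B u w) (hw : Bᵀ w = Pi.single u 2) :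
    B.submatrix u.succAbove w.succAbove *ᵥ 1 = 3 ∧
      1 ᵥ* B.submatrix u.succAbove w.succAbove = 3 := by
  obtain ⟨hr, hc⟩ := hB
  have hrow : ∀ l, B u (w.succAbove l) = 0 := by
    have h := congrFun hr u
    have hu := congrFun hw u
    simp only [Pi.add_apply, mulVec_one_apply, Fin.sum_univ_succAbove _ w] at h
    simp at hu h
    have hzero : ∑ l, B u (w.succAbove l) = 0 := by omega
    exact fun l => sum_eq_zero_iff.mp hzero l (mem_univ l)
  constructor
  · ext k
    have h := submatrix_succAbove_mulVec_one_apply B u w k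
    have h1 := congrFun hr (u.succAbove k)
    have h2 := congrFun hw (u.succAbove k)
    simp [Fin.succAbove_ne] at h1 h2 ⊢
    omega
  · ext l
    have h := one_vecMul_submatrix_succAbove_apply B u w l
    have h1 := congrFun hc (w.succAbove l)
    simp [Fin.succAbove_ne, hrow] at h1 h ⊢
    omega

theorem exists_submatrix {p : Fin (n + 2)} (hB : HasDeficiency B u w) (hpu : p ≠ u)
    (hw : Bᵀ w = Pi.single p 2) :
    ∃ u' w', HasDeficiency (B.submatrix p.succAbove w.succAbove) u' w' := by
  obtain ⟨hr, hc⟩ := hB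
  obtain ⟨u', rfl⟩ := Fin.exists_succAbove_eq hpu.symm
  obtain ⟨w', hw'⟩ : ∃ w', (fun l => B p (w.succAbove l)) = Pi.single w' 1 := by
    apply exists_eq_single_of_sum_eq_one
    have h := congrFun hr p
    have h2 := congrFun hw p
    simp only [Pi.add_apply, mulVec_one_apply, Fin.sum_univ_succAbove _ w] at h
    simp [hpu] at h h2
    omega
  refine ⟨u', w', ?_, ?_⟩
  · ext k
    have h := submatrix_succAbove_mulVec_one_apply B p w k
    have h1 := congrFun hr (p.succAbove k)
    have h2 := congrFun hw (p.succAbove k)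
    simp [Fin.succAbove_ne, Pi.single_apply] at h1 h2 ⊢
    omega
  · ext l
    have h := one_vecMul_submatrix_succAbove_apply B p w l
    have h1 := congrFun hc (w.succAbove l)
    have h2 := congrFun hw' l
    simp [Fin.succAbove_ne] at h1 h h2 ⊢
    omega

theorem exists_merge_rows {p q : Fin (n + 2)} (hB : HasDeficiency B u w) (hpq : p ≠ q)
    (hw : Bᵀ w = Pi.single p 1 + Pi.single q 1) :
    ∃ u' v', HasRowShift ((B.updateRow p (B p + B q)).submatrix q.succAbove w.succAbove) u' v' := by
  obtain ⟨hr, hc⟩ := hB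
  set C := B.updateRow p (B p + B q)
  have hCrow : C *ᵥ 1 = B *ᵥ 1 + Pi.single p ((B *ᵥ 1) q) := by
    rw [updateRow_add_mulVec_one, mulVec_one_apply]
  have hCcol : 1 ᵥ* C = 1 ᵥ* B + B q := one_vecMul_updateRow_add B p (B q)
  obtain ⟨p', rfl⟩ := Fin.exists_succAbove_eq hpq
  have hCw (k : Fin (n + 1)) : C (q.succAbove k) w = if k = p' then 2 else 0 := by
    have h1 := congrFun hw (q.succAbove k)
    have h2 := congrFun hw q
    by_cases hk : k = p' <;> simp [C, hk] at h1 h2 ⊢ <;> omega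
  have hcol : 1 ᵥ* C.submatrix q.succAbove w.succAbove = 3 := by
    ext l
    have h := one_vecMul_submatrix_succAbove_apply C q w l
    have h1 := congrFun hc (w.succAbove l)
    simp [hCcol, C, Fin.succAbove_ne] at h h1 ⊢
    omega
  have hrow (k : Fin (n + 1)) : (C.submatrix q.succAbove w.succAbove *ᵥ 1) k +
      (if k = p' then 2 else 0) = (B *ᵥ 1) (q.succAbove k) + if k = p' then (B *ᵥ 1) q else 0 := by
    have h := submatrix_succAbove_mulVec_one_apply C q w k
    rw [hCw, hCrow] at h
    simpa [Pi.single_apply] using h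
  have hrq := congrFun hr q
  by_cases huq : u = q
  · subst huq
    refine ⟨p', p', ?_, hcol⟩
    ext k
    have h1 := hrow k
    have h2 := congrFun hr (u.succAbove k)
    by_cases hk : k = p' <;> simp [hk, Fin.succAbove_ne] at h1 h2 hrq ⊢ <;> omega
  · obtain ⟨u', rfl⟩ := Fin.exists_succAbove_eq huq
    refine ⟨u', p', ?_, hcol⟩
    ext k
    have h1 := hrow k
    have h2 := congrFun hr (q.succAbove k)
    by_cases hk : k = p' <;> simp [hk, Pi.single_apply] at h1 h2 hrq ⊢ <;> omega

end HasDeficiency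

-- For matrices of size `n + 1` this says `per A ≥ (3/2) (4/3)^(n+1)`.
def DeficientBound (n : ℕ) : Prop :=
  ∀ (A : Matrix (Fin (n + 1)) (Fin (n + 1)) ℕ) (u w : Fin (n + 1)),
    HasDeficiency A u w → 2 * 4 ^ n ≤ 3 ^ n * A.permanent

namespace DeficientBound

variable {n : ℕ}

theorem le_of_hasRowShift (hD : DeficientBound n) {A : Matrix (Fin (n + 1)) (Fin (n + 1)) ℕ}
    {u v : Fin (n + 1)} (hA : HasRowShift A u v) :
    2 * 4 ^ (n + 1) ≤ 3 ^ (n + 1) * A.permanent := by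
  obtain ⟨hr, hc⟩ := hA
  have hs : (A *ᵥ 1) v = 3 ∨ (A *ᵥ 1) v = 4 := by
    have h := congrFun hr v
    rcases eq_or_ne v u with rfl | hvu
    · simp at h; omega
    · simp [hvu] at h; omega
  obtain ⟨j, A', rfl, hle⟩ := exists_eq_add_single_and_permanent_le A v (by omega)
  rw [add_single_mulVec_one, add_right_comm, add_left_inj] at hr
  rw [one_vecMul_add_single] at hc
  have hA' := hD A' u j ⟨hr, hc⟩
  have h43 : 4 * A'.permanent ≤ 3 * (A' + single v j 1).permanent := by
    rcases hs with hs | hs <;> rw [hs] at hle <;> omega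
  have := Nat.mul_le_mul_left (3 ^ n) h43
  rw [pow_succ, pow_succ]
  nlinarith

theorem succ (hD : DeficientBound n) : DeficientBound (n + 1) := by
  intro B u w hB
  obtain ⟨p, q, hw⟩ : ∃ p q, Bᵀ w = Pi.single p 1 + Pi.single q 1 := by
    apply exists_eq_single_add_single_of_sum_eq_two
    simpa [one_vecMul_apply] using congrFun hB.2 w
  rcases eq_or_ne p q with rfl | hpq
  · rw [permanent_eq_add_of_col_eq_single_add_single B hw, ← two_mul]
    rw [← Pi.single_add, one_add_one_eq_two] at hw
    rcases eq_or_ne p u with rfl | hpu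
    · obtain ⟨hr, hc⟩ := hB.regular_submatrix hw
      have := hD.le_of_hasRowShift (u := 0) (v := 0) ⟨by rw [hr], hc⟩
      exact this.trans (Nat.mul_le_mul_left _ (by omega))
    · obtain ⟨u', w', hM⟩ := hB.exists_submatrix hpu hw
      have := hD _ u' w' hM
      calc 2 * 4 ^ (n + 1) ≤ 6 * (2 * 4 ^ n) := by ring_nf; omega
        _ ≤ 6 * (3 ^ n * (B.submatrix p.succAbove w.succAbove).permanent) := by gcongr
        _ = _ := by ring
  · obtain ⟨u', v', hD'⟩ := hB.exists_merge_rows hpq hw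
    rw [permanent_eq_merge_rows_of_col_eq_single_add_single B hpq hw]
    exact hD.le_of_hasRowShift hD'

end DeficientBound

theorem deficientBound_zero : DeficientBound 0 := by
  intro A u w hA
  obtain rfl := Fin.fin_one_eq_zero u
  have h := congrFun hA.1 0
  simp [mulVec_one_apply] at h
  simp [permanent_unique]
  omega

theorem deficientBound : ∀ n, DeficientBound n
  | 0 => deficientBound_zero
  | n + 1 => (deficientBound n).succ

/-- If `A` is an `n × n` nonnegative integer matrix with all row and column sums equal to 3
which is the biadjacency matrix of a connected bipartite graph, then `per A ≥ 2 · (4/3)^n`. -/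
theorem stmt6 (n : ℕ) (A : Matrix (Fin n) (Fin n) ℕ)
    (hrow : ∀ i : Fin n, ∑ j : Fin n, A i j = 3)
    (hcol : ∀ j : Fin n, ∑ i : Fin n, A i j = 3)
    (hconn : (bipGraph (fun i j => 0 < A i j)).Connected) :
    2 * ((4 : ℝ) / 3) ^ n ≤ (matPermanent A : ℝ) := by
  obtain _ | m := n
  · obtain ⟨⟨_, ⟨⟩⟩ | ⟨_, ⟨⟩⟩⟩ := hconn.nonempty
  have hA : HasRowShift A 0 0 := by
    constructor <;> ext <;> simp [mulVec_one_apply, one_vecMul_apply, hrow, hcol]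
  have hbound := (deficientBound m).le_of_hasRowShift hA
  rw [matPermanent_eq_permanent, div_pow, mul_div_assoc', div_le_iff₀ (by positivity)]
  exact_mod_cast hbound.trans_eq (mul_comm _ _)
end

section
/- Let G = (X, W) be a simple d-uniform hypergraph on n vertices, d ≥ 4, d dividing n, in which vertex x_i has degree r_i. Then the number of 1-factors of G satisfies φ(G) ≤ ((d-1)!^n / μ(n,d) · Π_{i=1}^n r_i)^{1/d}, where μ(n,d) = (d!^2 / (d^d · d!^{1/d}))^n. -/
open scoped Classical in
/-- The permanent of a `d`-dimensional matrix of order `n`. -/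
noncomputable def mper {n d : ℕ} (A : (Fin d → Fin n) → ℕ) : ℕ :=
  ∑ σ ∈ Finset.univ.filter (fun σ : Fin d → Equiv.Perm (Fin n) =>
      ∀ h : 0 < d, σ ⟨0, h⟩ = Equiv.refl (Fin n)),
    ∏ i : Fin n, A (fun k => σ k i)

/-- `P` is a 1-factor of the hypergraph with hyperedge set `W`. -/
def IsOneFactor {n : ℕ} (W : Finset (Finset (Fin n))) (P : Finset (Finset (Fin n))) : Prop :=
  P ⊆ W ∧ ∀ v : Fin n, ∃! e, e ∈ P ∧ v ∈ e

/-- The number of 1-factors of the hypergraph with hyperedge set `W`. -/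
noncomputable def numOneFactors {n : ℕ} (W : Finset (Finset (Fin n))) : ℕ :=
  {P : Finset (Finset (Fin n)) | IsOneFactor W P}.ncard

open scoped Classical in
/-- The `d`-dimensional adjacency matrix of the `d`-uniform hypergraph with
hyperedge set `W` on `n` vertices. -/
noncomputable def adjMatrix (n d : ℕ) (W : Finset (Finset (Fin n))) :
    (Fin d → Fin n) → ℕ :=
  fun α => if Function.Injective α ∧ Finset.image α Finset.univ ∈ W then 1 else 0

/-!
Count 1-factors of the subhypergraph induced on a vertex set `V` by strong induction on `V`.
Pick `v ∈ V` of minimal degree. Every 1-factor of `V` contains one of the at most `deg v` edges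
`e ∋ v` inside `V`, and removing it leaves a 1-factor of `V \ e`; hence, for a suitable such `e`,
`φ(V)^d ≤ (deg v)^d · φ(V \ e)^d ≤ ∏_{i ∈ e} deg i · ∏_{i ∈ V \ e} deg i`.
This gives `φ(G)^d ≤ ∏ rᵢ`, and the factor `(d-1)!^n / μ(n,d)` in front of `∏ rᵢ` is at least `1`
because `d! ≤ d^(d-1)`.
-/

open Finset
open scoped Nat

open scoped Classical in
noncomputable def oneFactorsOn {α : Type*} (W : Finset (Finset α)) (V : Finset α) :
    Finset (Finset (Finset α)) :=
  W.powerset.filter fun P => (∀ v ∈ V, ∃! e, e ∈ P ∧ v ∈ e) ∧ ∀ e ∈ P, e ⊆ V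

lemma mem_oneFactorsOn {α : Type*} {W : Finset (Finset α)} {V : Finset α}
    {P : Finset (Finset α)} :
    P ∈ oneFactorsOn W V ↔ P ⊆ W ∧ (∀ v ∈ V, ∃! e, e ∈ P ∧ v ∈ e) ∧ ∀ e ∈ P, e ⊆ V := by
  simp only [oneFactorsOn, mem_filter, mem_powerset]

lemma card_oneFactorsOn_empty_le_one {α : Type*} {W : Finset (Finset α)} {d : ℕ} (hd : 0 < d)
    (huniform : ∀ e ∈ W, e.card = d) :
    (oneFactorsOn W ∅).card ≤ 1 := by
  have h : ∀ P ∈ oneFactorsOn W ∅, P = ∅ := by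
    intro P hP
    rw [mem_oneFactorsOn] at hP
    refine eq_empty_of_forall_notMem fun e he => ?_
    have hcard := huniform e (hP.1 he)
    rw [subset_empty.mp (hP.2.2 e he), card_empty] at hcard
    omega
  exact card_le_one.mpr fun P hP Q hQ => (h P hP).trans (h Q hQ).symm

section OneFactorsOn

variable {α : Type*} [DecidableEq α] {W : Finset (Finset α)} {V : Finset α}

lemma erase_mem_oneFactorsOn_sdiff {P : Finset (Finset α)} {e : Finset α}
    (hP : P ∈ oneFactorsOn W V) (he : e ∈ P) : P.erase e ∈ oneFactorsOn W (V \ e) := by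
  obtain ⟨hPW, huniq, hPV⟩ := mem_oneFactorsOn.mp hP
  refine mem_oneFactorsOn.mpr ⟨(erase_subset e P).trans hPW, fun u hu => ?_, fun e' he' u hue' => ?_⟩
  · obtain ⟨huV, hue⟩ := mem_sdiff.mp hu
    obtain ⟨e', ⟨he'P, hue'⟩, he'uniq⟩ := huniq u huV
    have he'e : e' ≠ e := by rintro rfl; exact hue hue'
    exact ⟨e', ⟨mem_erase.mpr ⟨he'e, he'P⟩, hue'⟩,
      fun e'' ⟨he''P, hue''⟩ => he'uniq e'' ⟨(mem_erase.mp he''P).2, hue''⟩⟩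
  · obtain ⟨he'e, he'P⟩ := mem_erase.mp he'
    have huV : u ∈ V := hPV e' he'P hue'
    refine mem_sdiff.mpr ⟨huV, fun hue => he'e ?_⟩
    exact (huniq u huV).unique ⟨he'P, hue'⟩ ⟨he, hue⟩

lemma card_filter_mem_oneFactorsOn_le (e : Finset α) :
    ((oneFactorsOn W V).filter (e ∈ ·)).card ≤ (oneFactorsOn W (V \ e)).card := by
  refine card_le_card_of_injOn (·.erase e) (fun P hP => ?_) (fun P hP Q hQ hPQ => ?_)
  · obtain ⟨hP, he⟩ := mem_filter.mp hP
    exact erase_mem_oneFactorsOn_sdiff hP he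
  · have hPQ : insert e (P.erase e) = insert e (Q.erase e) := congrArg (insert e) hPQ
    rwa [insert_erase (mem_filter.mp hP).2, insert_erase (mem_filter.mp hQ).2] at hPQ

lemma card_oneFactorsOn_le_sum {v : α} (hv : v ∈ V) :
    (oneFactorsOn W V).card ≤
      ∑ e ∈ W.filter (fun e => v ∈ e ∧ e ⊆ V), (oneFactorsOn W (V \ e)).card := by
  have hcover : oneFactorsOn W V ⊆
      (W.filter fun e => v ∈ e ∧ e ⊆ V).biUnion fun e => (oneFactorsOn W V).filter (e ∈ ·) := by
    intro P hP
    obtain ⟨hPW, huniq, hPV⟩ := mem_oneFactorsOn.mp hP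
    obtain ⟨e, ⟨heP, hve⟩, -⟩ := huniq v hv
    exact mem_biUnion.mpr ⟨e, mem_filter.mpr ⟨hPW heP, hve, hPV e heP⟩, mem_filter.mpr ⟨hP, heP⟩⟩
  calc (oneFactorsOn W V).card
      ≤ ∑ e ∈ W.filter (fun e => v ∈ e ∧ e ⊆ V), ((oneFactorsOn W V).filter (e ∈ ·)).card :=
        (card_le_card hcover).trans card_biUnion_le
    _ ≤ _ := sum_le_sum fun e _ => card_filter_mem_oneFactorsOn_le e

theorem card_oneFactorsOn_pow_le_prod_degree {d : ℕ} (hd : 0 < d)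
    (huniform : ∀ e ∈ W, e.card = d) (V : Finset α) :
    (oneFactorsOn W V).card ^ d ≤ ∏ i ∈ V, (W.filter (i ∈ ·)).card := by
  induction V using strongInduction with
  | H V ih =>
  rcases V.eq_empty_or_nonempty with rfl | hV
  · simpa using pow_le_one₀ (Nat.zero_le _) (card_oneFactorsOn_empty_le_one hd huniform)
  obtain ⟨v, hvV, hvmin⟩ := V.exists_min_image (fun i => (W.filter (i ∈ ·)).card) hV
  set S := W.filter fun e => v ∈ e ∧ e ⊆ V
  rcases S.eq_empty_or_nonempty with hS | hS
  · have h0 : (oneFactorsOn W V).card = 0 := by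
      simpa [S, hS] using card_oneFactorsOn_le_sum (W := W) hvV
    simp [h0, hd.ne']
  obtain ⟨e, heS, hemax⟩ := S.exists_max_image (fun e => (oneFactorsOn W (V \ e)).card) hS
  obtain ⟨heW, hve, heV⟩ := mem_filter.mp heS
  have hSdeg : S.card ≤ (W.filter (v ∈ ·)).card :=
    card_le_card fun e he => mem_filter.mpr ⟨(mem_filter.mp he).1, (mem_filter.mp he).2.1⟩
  have hcard : (oneFactorsOn W V).card ≤ S.card * (oneFactorsOn W (V \ e)).card :=
    (card_oneFactorsOn_le_sum hvV).trans (sum_le_card_nsmul _ _ _ hemax)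
  have hdeg_e : (W.filter (v ∈ ·)).card ^ d ≤ ∏ i ∈ e, (W.filter (i ∈ ·)).card := by
    simpa [huniform e heW] using pow_card_le_prod e _ _ fun i hi => hvmin i (heV hi)
  have hrest := ih (V \ e) (sdiff_ssubset heV ⟨v, hve⟩)
  calc (oneFactorsOn W V).card ^ d
      ≤ S.card ^ d * (oneFactorsOn W (V \ e)).card ^ d := by
        rw [← mul_pow]; exact Nat.pow_le_pow_left hcard d
    _ ≤ (∏ i ∈ e, (W.filter (i ∈ ·)).card) * ∏ i ∈ V \ e, (W.filter (i ∈ ·)).card :=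
        Nat.mul_le_mul ((Nat.pow_le_pow_left hSdeg d).trans hdeg_e) hrest
    _ = ∏ i ∈ V, (W.filter (i ∈ ·)).card := by rw [mul_comm, prod_sdiff heV]

end OneFactorsOn

lemma numOneFactors_eq_card_oneFactorsOn_univ {n : ℕ} (W : Finset (Finset (Fin n))) :
    numOneFactors W = (oneFactorsOn W univ).card := by
  rw [numOneFactors, ← Set.ncard_coe_finset]
  congr 1
  ext P
  simp [IsOneFactor, mem_oneFactorsOn]

lemma Nat.factorial_succ_le_pow (m : ℕ) : (m + 1)! ≤ (m + 1) ^ m := by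
  induction m with
  | zero => simp
  | succ k ih =>
    calc (k + 2)! = (k + 2) * (k + 1)! := rfl
      _ ≤ (k + 2) * (k + 2) ^ k :=
        Nat.mul_le_mul_left _ (ih.trans (Nat.pow_le_pow_left (by omega) k))
      _ = (k + 2) ^ (k + 1) := by ring

lemma one_le_factorial_pow_div_mu (n : ℕ) {d : ℕ} (hd : 0 < d) :
    1 ≤ ((d - 1)! : ℝ) ^ n / ((d ! : ℝ) ^ 2 / ((d : ℝ) ^ d * (d ! : ℝ) ^ ((1 : ℝ) / d))) ^ n := by
  obtain ⟨m, rfl⟩ : ∃ m, d = m + 1 := ⟨d - 1, by omega⟩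
  have hfac : ((m + 1)! : ℝ) = (m + 1 : ℝ) * m ! := by push_cast [Nat.factorial_succ]; ring
  have hpow : ((m + 1)! : ℝ) ≤ (m + 1 : ℝ) ^ m := by exact_mod_cast Nat.factorial_succ_le_pow m
  have hroot : (1 : ℝ) ≤ ((m + 1)! : ℝ) ^ ((1 : ℝ) / (m + 1 : ℕ)) :=
    Real.one_le_rpow (by exact_mod_cast (m + 1).factorial_pos) (by positivity)
  rw [← div_pow]
  refine one_le_pow₀ ((one_le_div₀ (by positivity)).mpr ?_)
  rw [div_le_iff₀ (by positivity), Nat.add_sub_cancel]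
  calc ((m + 1)! : ℝ) ^ 2 = m ! * ((m + 1 : ℝ) * (m + 1)!) := by rw [sq, hfac]; ring
    _ ≤ m ! * ((m + 1 : ℝ) * (m + 1 : ℝ) ^ m) := by gcongr
    _ = m ! * (m + 1 : ℝ) ^ (m + 1) := by ring
    _ ≤ m ! * ((m + 1 : ℝ) ^ (m + 1) * ((m + 1)! : ℝ) ^ ((1 : ℝ) / (m + 1 : ℕ))) := by
        gcongr; exact le_mul_of_one_le_right (by positivity) hroot
    _ = _ := by push_cast; ring

theorem stmt11_general (n d : ℕ) (hd : 4 ≤ d) (W : Finset (Finset (Fin n)))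
    (huniform : ∀ e ∈ W, e.card = d) (r : Fin n → ℕ)
    (hdeg : ∀ i : Fin n, (W.filter (fun e => i ∈ e)).card = r i) :
    (numOneFactors W : ℝ) ≤
      (((d - 1).factorial : ℝ) ^ n /
        (((d.factorial : ℝ) ^ 2 /
          ((d : ℝ) ^ d * (d.factorial : ℝ) ^ ((1 : ℝ) / d))) ^ n) *
        ∏ i : Fin n, (r i : ℝ)) ^ ((1 : ℝ) / d) := by
  have hd0 : 0 < d := by omega
  have hpow : (numOneFactors W : ℝ) ^ d ≤ ∏ i : Fin n, (r i : ℝ) := by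
    have h := card_oneFactorsOn_pow_le_prod_degree hd0 huniform (univ : Finset (Fin n))
    simp only [hdeg] at h
    rw [numOneFactors_eq_card_oneFactorsOn_univ]
    exact_mod_cast h
  have hμ := one_le_factorial_pow_div_mu n hd0
  rw [one_div] at hμ ⊢
  rw [Real.le_rpow_inv_iff_of_pos (by positivity) (by positivity) (by positivity),
    Real.rpow_natCast]
  exact hpow.trans (le_mul_of_one_le_left (by positivity) hμ)

/-- For a simple `d`-uniform hypergraph on `n` vertices (`d ≥ 4`, `d ∣ n`) in which vertex
`i` has degree `r i`, the number of 1-factors satisfies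
`φ(G) ≤ ((d-1)!^n / μ(n,d) · ∏ r i)^(1/d)`, where `μ(n,d) = (d!²/(d^d · d!^(1/d)))^n`. -/
theorem stmt11 (n d : ℕ) (hd : 4 ≤ d) (hdn : d ∣ n) (W : Finset (Finset (Fin n)))
    (huniform : ∀ e ∈ W, e.card = d) (r : Fin n → ℕ)
    (hdeg : ∀ i : Fin n, (W.filter (fun e => i ∈ e)).card = r i) :
    (numOneFactors W : ℝ) ≤
      (((d - 1).factorial : ℝ) ^ n /
        (((d.factorial : ℝ) ^ 2 /
          ((d : ℝ) ^ d * (d.factorial : ℝ) ^ ((1 : ℝ) / d))) ^ n) *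
        ∏ i : Fin n, (r i : ℝ)) ^ ((1 : ℝ) / d) :=
  stmt11_general n d hd W huniform r hdeg
end
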